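/- Let I ⊆ ℝ be an interval and let f : ℝ → ℝ be continuous and strictly increasing on I. If the f-potential λ_f is convex on L^c(Ω,I), then f is convex on I. -/

import Mathlib

open MeasureTheory

/-- `L^c(Ω, I)`: measurable functions whose range is contained in a compact subset of `I`. -/
def MemLc {Ω : Type*} [MeasurableSpace Ω] (I : Set ℝ) (φ : Ω → ℝ) : Prop :=
  Measurable φ ∧ ∃ K : Set ℝ, K ⊆ I ∧ IsCompact K ∧ ∀ ω, φ ω ∈ K

/-- The `f`-potential `λ_f(φ) = f⁻¹(∫ f(φ(ω)) dP(ω))`, where `f⁻¹` is the inverse of the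
restriction of `f` to `I`. -/
noncomputable def fPotential {Ω : Type*} [MeasurableSpace Ω] (P : Measure Ω)
    (f : ℝ → ℝ) (I : Set ℝ) (φ : Ω → ℝ) : ℝ :=
  Function.invFunOn f I (∫ ω, f (φ ω) ∂P)

/-!
Let `p = P(A) ∈ (0, 1)`. For `x, y ∈ I`, the functions equal to `x` on `A` and `y` off `A`, and
the other way round, average to the constant `(x + y) / 2`, so convexity of `λ_f` gives
`x + y ≤ w₁ + w₂` whenever `f w₁ = p f x + (1 - p) f y` and `f w₂ = p f y + (1 - p) f x`.
Iterating this keeps the mean of the two `f`-values and contracts their spread by `2p - 1`; since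
one of the two points always stays above `(x + y) / 2`, monotonicity of `f` yields midpoint
convexity, and a continuous midpoint-convex function is convex.
-/

open Set

theorem IsClosed.Icc_subset_of_add_div_two_mem {S : Set ℝ} (hS : IsClosed S)
    (hmid : ∀ s ∈ S, ∀ t ∈ S, (s + t) / 2 ∈ S) {a b : ℝ} (ha : a ∈ S) (hb : b ∈ S) :
    Icc a b ⊆ S := by
  intro t ht
  by_contra htS
  have hlow : BddAbove (S ∩ Icc a t) := ⟨t, fun _ hz => hz.2.2⟩
  have hupp : BddBelow (S ∩ Icc t b) := ⟨t, fun _ hz => hz.2.1⟩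
  -- `t` lies in a gap `(α, β)` of `S` whose midpoint would be in `S`
  have hα := (hS.inter isClosed_Icc).csSup_mem ⟨a, ha, le_rfl, ht.1⟩ hlow
  have hβ := (hS.inter isClosed_Icc).csInf_mem ⟨b, hb, ht.2, le_rfl⟩ hupp
  set α := sSup (S ∩ Icc a t)
  set β := sInf (S ∩ Icc t b)
  have hαt : α < t := hα.2.2.lt_of_ne fun h => htS (h ▸ hα.1)
  have htβ : t < β := hβ.2.1.lt_of_ne' fun h => htS (h ▸ hβ.1)
  have hm := hmid α hα.1 β hβ.1
  rcases le_total ((α + β) / 2) t with h | h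
  · have : (α + β) / 2 ≤ α := le_csSup hlow ⟨hm, hα.2.1.trans (by linarith), h⟩
    linarith
  · have : β ≤ (α + β) / 2 := csInf_le hupp ⟨hm, h, le_trans (by linarith) hβ.2.2⟩
    linarith

theorem convexOn_of_continuousOn_of_midpoint_le {I : Set ℝ} {f : ℝ → ℝ} (hI : Convex ℝ I)
    (hf : ContinuousOn f I) (hmid : ∀ x ∈ I, ∀ y ∈ I, f ((x + y) / 2) ≤ (f x + f y) / 2) :
    ConvexOn ℝ I f := by
  refine ⟨hI, fun x hx y hy a b ha hb hab => ?_⟩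
  have hline : ∀ t ∈ Icc (0 : ℝ) 1, (1 - t) * x + t * y ∈ I := fun t ht => by
    simpa only [smul_eq_mul] using hI hx hy (sub_nonneg.2 ht.2) ht.1 (by ring)
  set S := {t ∈ Icc (0 : ℝ) 1 | f ((1 - t) * x + t * y) ≤ (1 - t) * f x + t * f y}
  have hS : IsClosed S := isClosed_Icc.isClosed_le (hf.comp (by fun_prop) hline) (by fun_prop)
  have hSmid : ∀ s ∈ S, ∀ t ∈ S, (s + t) / 2 ∈ S := by
    rintro s ⟨hs, hfs⟩ t ⟨ht, hft⟩
    refine ⟨⟨by linarith [hs.1, ht.1], by linarith [hs.2, ht.2]⟩, ?_⟩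
    calc f ((1 - (s + t) / 2) * x + (s + t) / 2 * y)
        = f ((((1 - s) * x + s * y) + ((1 - t) * x + t * y)) / 2) := by congr 1; ring
      _ ≤ (f ((1 - s) * x + s * y) + f ((1 - t) * x + t * y)) / 2 :=
        hmid _ (hline s hs) _ (hline t ht)
      _ ≤ (1 - (s + t) / 2) * f x + (s + t) / 2 * f y := by linarith
  have hbS : b ∈ S := hS.Icc_subset_of_add_div_two_mem hSmid (a := 0) (b := 1)
    (by norm_num [S]) (by norm_num [S]) ⟨hb, by linarith⟩
  obtain rfl : a = 1 - b := by linarith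
  simpa only [smul_eq_mul] using hbS.2

theorem Convex.image_of_continuousOn {I : Set ℝ} {f : ℝ → ℝ} (hI : Convex ℝ I)
    (hf : ContinuousOn f I) : Convex ℝ (f '' I) :=
  Real.convex_iff_isPreconnected.mpr (hI.isPreconnected.image f hf)

theorem Convex.add_div_two_mem {I : Set ℝ} (hI : Convex ℝ I) {x y : ℝ} (hx : x ∈ I)
    (hy : y ∈ I) : (x + y) / 2 ∈ I := by
  simpa [midpoint_eq_smul_add, div_eq_inv_mul] using hI.midpoint_mem hx hy

open Filter Topology in
theorem map_add_div_two_le_of_forall_add_le_add {I : Set ℝ} {f : ℝ → ℝ} (hI : Convex ℝ I)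
    (hf : ContinuousOn f I) (hfm : MonotoneOn f I) {p : ℝ} (hp : p ∈ Ioo (0 : ℝ) 1)
    (hswap : ∀ z₁ ∈ I, ∀ z₂ ∈ I, ∀ w₁ ∈ I, ∀ w₂ ∈ I, f w₁ = p * f z₁ + (1 - p) * f z₂ →
      f w₂ = p * f z₂ + (1 - p) * f z₁ → z₁ + z₂ ≤ w₁ + w₂)
    {x y : ℝ} (hx : x ∈ I) (hy : y ∈ I) : f ((x + y) / 2) ≤ (f x + f y) / 2 := by
  set s := (f x + f y) / 2
  set d := (f x - f y) / 2
  set r := 2 * p - 1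
  have hr : |r| < 1 := abs_lt.2 ⟨by linarith [hp.1], by linarith [hp.2]⟩
  have hmix : ∀ u ∈ f '' I, ∀ v ∈ f '' I, p * u + (1 - p) * v ∈ f '' I := fun u hu v hv =>
    hI.image_of_continuousOn hf hu hv hp.1.le (by linarith [hp.2]) (by ring)
  -- each application of `hswap` keeps the mean `s` of `f z₁, f z₂` and scales their spread by `r`
  have hiter : ∀ n : ℕ, ∃ z₁ ∈ I, ∃ z₂ ∈ I,
      f z₁ = s + r ^ n * d ∧ f z₂ = s - r ^ n * d ∧ x + y ≤ z₁ + z₂ := by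
    intro n
    induction n with
    | zero => exact ⟨x, hx, y, hy, by ring, by ring, le_rfl⟩
    | succ n ih =>
      obtain ⟨z₁, hz₁, z₂, hz₂, hf₁, hf₂, hle⟩ := ih
      obtain ⟨w₁, hw₁, hfw₁⟩ := hmix _ (mem_image_of_mem f hz₁) _ (mem_image_of_mem f hz₂)
      obtain ⟨w₂, hw₂, hfw₂⟩ := hmix _ (mem_image_of_mem f hz₂) _ (mem_image_of_mem f hz₁)
      refine ⟨w₁, hw₁, w₂, hw₂, ?_, ?_, hle.trans (hswap _ hz₁ _ hz₂ _ hw₁ _ hw₂ hfw₁ hfw₂)⟩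
      · rw [hfw₁, hf₁, hf₂]; ring
      · rw [hfw₂, hf₁, hf₂]; ring
  have hm := hI.add_div_two_mem hx hy
  have hbound : ∀ n : ℕ, f ((x + y) / 2) ≤ s + |r| ^ n * |d| := by
    intro n
    obtain ⟨z₁, hz₁, z₂, hz₂, hf₁, hf₂, hle⟩ := hiter n
    have hrd : |r ^ n * d| = |r| ^ n * |d| := by rw [abs_mul, abs_pow]
    -- as `x + y ≤ z₁ + z₂`, one of `z₁, z₂` lies above the midpoint
    rcases le_total ((x + y) / 2) z₁ with h | h
    · linarith [hfm hm hz₁ h, le_abs_self (r ^ n * d)]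
    · linarith [hfm hm hz₂ (by linarith), neg_abs_le (r ^ n * d)]
  have hlim : Tendsto (fun n : ℕ => s + |r| ^ n * |d|) atTop (𝓝 s) := by
    simpa using
      ((tendsto_pow_atTop_nhds_zero_of_lt_one (abs_nonneg r) hr).mul_const |d|).const_add s
  exact ge_of_tendsto' hlim hbound

section Potential

variable {Ω : Type*} [MeasurableSpace Ω] (P : Measure Ω) {f : ℝ → ℝ} {I : Set ℝ}

theorem fPotential_eq_of_map_eq (hf : InjOn f I) {φ : Ω → ℝ} {w : ℝ} (hw : w ∈ I)
    (h : f w = ∫ ω, f (φ ω) ∂P) : fPotential P f I φ = w := by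
  rw [fPotential, ← h]
  exact hf.leftInvOn_invFunOn hw

theorem fPotential_const [IsProbabilityMeasure P] (hf : InjOn f I) {w : ℝ} (hw : w ∈ I) :
    fPotential P f I (fun _ => w) = w :=
  fPotential_eq_of_map_eq P hf hw (by simp)

section Piecewise

variable {A : Set Ω} [DecidablePred (· ∈ A)]

theorem memLc_piecewise_const (hA : MeasurableSet A) {x y : ℝ} (hx : x ∈ I) (hy : y ∈ I) :
    MemLc I (A.piecewise (fun _ => x) (fun _ => y)) :=
  ⟨measurable_const.piecewise hA measurable_const, {x, y},
    insert_subset hx (singleton_subset_iff.2 hy), (toFinite _).isCompact,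
    fun ω => by by_cases h : ω ∈ A <;> simp [h]⟩

theorem integral_comp_piecewise_const [IsProbabilityMeasure P] (hA : MeasurableSet A)
    (g : ℝ → ℝ) (x y : ℝ) :
    ∫ ω, g (A.piecewise (fun _ => x) (fun _ => y) ω) ∂P =
      P.real A * g x + (1 - P.real A) * g y := by
  simp_rw [apply_piecewise A _ _ fun _ => g]
  rw [integral_piecewise hA integrableOn_const integrableOn_const, setIntegral_const,
    setIntegral_const, probReal_compl_eq_one_sub hA, smul_eq_mul, smul_eq_mul]

end Piecewise

theorem ConvexOn.add_le_add_of_fPotential [IsProbabilityMeasure P]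
    (hpot : ConvexOn ℝ {φ : Ω → ℝ | MemLc I φ} (fPotential P f I)) (hI : Convex ℝ I)
    (hf : InjOn f I) {A : Set Ω} (hA : MeasurableSet A) {z₁ z₂ w₁ w₂ : ℝ} (hz₁ : z₁ ∈ I)
    (hz₂ : z₂ ∈ I) (hw₁ : w₁ ∈ I) (hw₂ : w₂ ∈ I)
    (hfw₁ : f w₁ = P.real A * f z₁ + (1 - P.real A) * f z₂)
    (hfw₂ : f w₂ = P.real A * f z₂ + (1 - P.real A) * f z₁) :
    z₁ + z₂ ≤ w₁ + w₂ := by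
  classical
  set φ := A.piecewise (fun _ => z₁) (fun _ => z₂)
  set ψ := A.piecewise (fun _ => z₂) (fun _ => z₁)
  have hφ : fPotential P f I φ = w₁ := fPotential_eq_of_map_eq P hf hw₁
    (by rw [hfw₁, integral_comp_piecewise_const P hA])
  have hψ : fPotential P f I ψ = w₂ := fPotential_eq_of_map_eq P hf hw₂
    (by rw [hfw₂, integral_comp_piecewise_const P hA])
  have hmean : (1 / 2 : ℝ) • φ + (1 / 2 : ℝ) • ψ = fun _ => (z₁ + z₂) / 2 := by
    ext ω
    by_cases h : ω ∈ A <;> simp [φ, ψ, h] <;> ring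
  have := hpot.2 (memLc_piecewise_const hA hz₁ hz₂) (memLc_piecewise_const hA hz₂ hz₁)
    (by norm_num) (by norm_num) (add_halves 1)
  rw [hmean, fPotential_const P hf (hI.add_div_two_mem hz₁ hz₂), hφ, hψ, smul_eq_mul,
    smul_eq_mul] at this
  linarith

end Potential

theorem potential_convex_implies_f_convex
    {Ω : Type*} [MeasurableSpace Ω] (P : Measure Ω) [IsProbabilityMeasure P]
    (hP : ∃ A : Set Ω, MeasurableSet A ∧ 0 < P A ∧ P A < 1)
    (I : Set ℝ) (hIconv : Convex ℝ I)
    (f : ℝ → ℝ) (hfc : ContinuousOn f I) (hfm : StrictMonoOn f I)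
    (hpot : ConvexOn ℝ {φ : Ω → ℝ | MemLc I φ} (fPotential P f I)) :
    ConvexOn ℝ I f := by
  obtain ⟨A, hA, hA0, hA1⟩ := hP
  have hp : P.real A ∈ Ioo (0 : ℝ) 1 :=
    ⟨ENNReal.toReal_pos hA0.ne' (measure_ne_top P A), by
      simpa [measureReal_def] using ENNReal.toReal_strict_mono ENNReal.one_ne_top hA1⟩
  refine convexOn_of_continuousOn_of_midpoint_le hIconv hfc fun x hx y hy => ?_
  exact map_add_div_two_le_of_forall_add_le_add hIconv hfc hfm.monotoneOn hp
    (fun _ hz₁ _ hz₂ _ hw₁ _ hw₂ =>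
      hpot.add_le_add_of_fPotential P hIconv hfm.injOn hA hz₁ hz₂ hw₁ hw₂) hx hy
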